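/- With δ₀(g) defined as in the SURE criterion δ₀(g) = ‖Y − (1/(1+g))Y₀ − (g/(1+g))Ŷ_OLS‖² + (2gp/(1+g))σ̂² − nσ̂², the second derivative of δ₀ at g* = ‖Ŷ_OLS − Y₀‖²/(pσ̂²) − 1 equals 2p⁴σ̂⁸/‖Ŷ_OLS − Y₀‖⁶, which is strictly positive when ‖Ŷ_OLS − Y₀‖ > 0; hence g* is a local minimizer of δ₀. -/

import Mathlib

/-!
Write `Ŷ = H Y` with `H` the hat matrix of `X`. Since `H` is a symmetric idempotent fixing the
columns of `X`, the residual `Y - Ŷ` is orthogonal to `Ŷ - Y₀`, and for `s = (1 + g)⁻¹`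
Pythagoras turns the SURE criterion into the quadratic
`δ₀(g) = ‖Y - Ŷ‖² + 2pσ̂² - nσ̂² + ‖Ŷ - Y₀‖² s² - 2pσ̂² s`
(away from the pole `g = -1`). Its minimum over `s` is at `s = pσ̂²/‖Ŷ - Y₀‖²`, i.e. at `g*`,
and differentiating twice through `ds/dg = -s²` gives the value of `δ₀''(g*)`.
-/

open Matrix Filter Topology

section HatMatrix

variable {m k R : Type*} [Fintype m] [Fintype k] [DecidableEq k] [CommRing R]

noncomputable def hatMatrix (X : Matrix m k R) : Matrix m m R := X * (Xᵀ * X)⁻¹ * Xᵀ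

variable {X : Matrix m k R}

theorem hatMatrix_mul_eq_self (hX : IsUnit (Xᵀ * X).det) : hatMatrix X * X = X := by
  rw [hatMatrix, Matrix.mul_assoc, Matrix.mul_assoc, nonsing_inv_mul _ hX, Matrix.mul_one]

theorem isIdempotentElem_hatMatrix (hX : IsUnit (Xᵀ * X).det) :
    IsIdempotentElem (hatMatrix X) := by
  calc hatMatrix X * hatMatrix X = hatMatrix X * X * (Xᵀ * X)⁻¹ * Xᵀ := by
        simp only [hatMatrix, Matrix.mul_assoc]
    _ = hatMatrix X := by rw [hatMatrix_mul_eq_self hX, hatMatrix]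

theorem transpose_hatMatrix (X : Matrix m k R) : (hatMatrix X)ᵀ = hatMatrix X := by
  simp only [hatMatrix, transpose_mul, transpose_transpose, transpose_nonsing_inv,
    Matrix.mul_assoc]

theorem dotProduct_sub_hatMatrix_mulVec (hX : IsUnit (Xᵀ * X).det) (Y : m → R) (β : k → R) :
    (Y - hatMatrix X *ᵥ Y) ⬝ᵥ (hatMatrix X *ᵥ Y - X *ᵥ β) = 0 := by
  have hfit : hatMatrix X *ᵥ Y - X *ᵥ β = hatMatrix X *ᵥ (Y - X *ᵥ β) := by
    rw [mulVec_sub, mulVec_mulVec, hatMatrix_mul_eq_self hX]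
  have hres : hatMatrix X *ᵥ (Y - hatMatrix X *ᵥ Y) = 0 := by
    rw [mulVec_sub, mulVec_mulVec, (isIdempotentElem_hatMatrix hX).eq, sub_self]
  rw [hfit, dotProduct_mulVec, ← mulVec_transpose, transpose_hatMatrix, hres, zero_dotProduct]

end HatMatrix

theorem dotProduct_add_smul_self_of_orthogonal {ι : Type*} [Fintype ι] {u w : ι → ℝ}
    (h : u ⬝ᵥ w = 0) (t : ℝ) :
    (u + t • w) ⬝ᵥ (u + t • w) = u ⬝ᵥ u + t ^ 2 * (w ⬝ᵥ w) := by
  have h' : w ⬝ᵥ u = 0 := by rw [dotProduct_comm, h]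
  simp only [add_dotProduct, dotProduct_add, smul_dotProduct, dotProduct_smul, smul_eq_mul,
    h, h']
  ring

theorem hasDerivAt_inv_one_add_pow (j : ℕ) {g : ℝ} (hg : 1 + g ≠ 0) :
    HasDerivAt (fun x : ℝ => ((1 + x)⁻¹) ^ j) (-j * ((1 + g)⁻¹) ^ (j + 1)) g := by
  have hinv : HasDerivAt (fun x : ℝ => (1 + x)⁻¹) (-((1 + g)⁻¹) ^ 2) g := by
    simpa [neg_div, inv_pow] using ((hasDerivAt_id g).const_add 1).fun_inv hg
  refine (hinv.fun_pow j).congr_deriv ?_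
  rcases j with _ | j
  · simp
  · simp only [Nat.add_sub_cancel]
    push_cast
    ring

section QuadInvOneAdd

noncomputable def quadInvOneAdd (K D c g : ℝ) : ℝ := K + D * ((1 + g)⁻¹) ^ 2 - c * (1 + g)⁻¹

variable {K D c g : ℝ}

theorem hasDerivAt_quadInvOneAdd (hg : 1 + g ≠ 0) :
    HasDerivAt (quadInvOneAdd K D c) (-2 * D * ((1 + g)⁻¹) ^ 3 + c * ((1 + g)⁻¹) ^ 2) g := by
  have h := ((hasDerivAt_inv_one_add_pow 2 hg).const_mul D).const_add K |>.fun_sub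
    ((hasDerivAt_inv_one_add_pow 1 hg).const_mul c)
  simp only [pow_one] at h
  exact h.congr_deriv (by push_cast; ring)

theorem eventually_one_add_ne_zero (hg : 1 + g ≠ 0) : ∀ᶠ x in 𝓝 g, 1 + x ≠ 0 :=
  (continuous_const.add continuous_id).continuousAt.eventually_ne hg

theorem hasDerivAt_deriv_quadInvOneAdd (hg : 1 + g ≠ 0) :
    HasDerivAt (deriv (quadInvOneAdd K D c))
      (6 * D * ((1 + g)⁻¹) ^ 4 - 2 * c * ((1 + g)⁻¹) ^ 3) g := by
  have h := ((hasDerivAt_inv_one_add_pow 3 hg).const_mul (-2 * D)).fun_add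
    ((hasDerivAt_inv_one_add_pow 2 hg).const_mul c)
  refine (h.congr_deriv (by push_cast; ring)).congr_of_eventuallyEq ?_
  filter_upwards [eventually_one_add_ne_zero hg] with x hx
  exact (hasDerivAt_quadInvOneAdd hx).deriv

/-- At the pole `g = -1` junk division gives `(1 + g)⁻¹ = 0`, and the bound holds there too. -/
theorem quadInvOneAdd_le (hD : 0 < D) {g₀ : ℝ} (hg₀ : c = 2 * D * (1 + g₀)⁻¹) (g : ℝ) :
    quadInvOneAdd K D c g₀ ≤ quadInvOneAdd K D c g := by
  simp only [quadInvOneAdd, hg₀]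
  nlinarith [mul_nonneg hD.le (sq_nonneg ((1 + g)⁻¹ - (1 + g₀)⁻¹))]

end QuadInvOneAdd

theorem sure_eq_quadInvOneAdd {ι : Type*} [Fintype ι] {Y Y₀ Yhat : ι → ℝ}
    (horth : (Y - Yhat) ⬝ᵥ (Yhat - Y₀) = 0) (p n σ2 : ℝ) {g : ℝ} (hg : 1 + g ≠ 0) :
    (Y - (1 / (1 + g)) • Y₀ - (g / (1 + g)) • Yhat) ⬝ᵥ
        (Y - (1 / (1 + g)) • Y₀ - (g / (1 + g)) • Yhat)
      + (2 * g * p / (1 + g)) * σ2 - n * σ2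
      = quadInvOneAdd ((Y - Yhat) ⬝ᵥ (Y - Yhat) + 2 * p * σ2 - n * σ2)
          ((Yhat - Y₀) ⬝ᵥ (Yhat - Y₀)) (2 * p * σ2) g := by
  have hvec : Y - (1 / (1 + g)) • Y₀ - (g / (1 + g)) • Yhat
      = (Y - Yhat) + (1 + g)⁻¹ • (Yhat - Y₀) := by
    ext i
    simp only [Pi.add_apply, Pi.sub_apply, Pi.smul_apply, smul_eq_mul]
    field_simp
    ring
  rw [hvec, dotProduct_add_smul_self_of_orthogonal horth, quadInvOneAdd]
  field_simp
  ring

/-- The second derivative of the SURE criterion at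
g* = ‖Ŷ_OLS − Y₀‖²/(pσ̂²) − 1 equals 2p⁴σ̂⁸/‖Ŷ_OLS − Y₀‖⁶, which is strictly
positive when ‖Ŷ_OLS − Y₀‖ > 0; hence g* is a local minimizer of δ₀. -/
theorem stmt_6 {n p : ℕ} (X : Matrix (Fin n) (Fin p) ℝ) (Y : Fin n → ℝ)
    (β₀ : Fin p → ℝ) (σ2 : ℝ) (hσ2 : 0 < σ2) (hp : 1 ≤ p)
    (hinv : IsUnit (Xᵀ * X).det)
    (Y₀ : Fin n → ℝ) (hY₀ : Y₀ = X *ᵥ β₀)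
    (Yhat : Fin n → ℝ) (hYhat : Yhat = (X * (Xᵀ * X)⁻¹ * Xᵀ) *ᵥ Y)
    (hYY : 0 < (Yhat - Y₀) ⬝ᵥ (Yhat - Y₀))
    (δ₀ : ℝ → ℝ)
    (hδ₀ : δ₀ = fun g =>
      (Y - (1 / (1 + g)) • Y₀ - (g / (1 + g)) • Yhat) ⬝ᵥ
        (Y - (1 / (1 + g)) • Y₀ - (g / (1 + g)) • Yhat)
      + (2 * g * p / (1 + g)) * σ2 - n * σ2)
    (gstar : ℝ) (hgstar : gstar = (Yhat - Y₀) ⬝ᵥ (Yhat - Y₀) / ((p : ℝ) * σ2) - 1) :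
    deriv (deriv δ₀) gstar
        = 2 * (p : ℝ) ^ 4 * σ2 ^ 4 / ((Yhat - Y₀) ⬝ᵥ (Yhat - Y₀)) ^ 3
      ∧ 0 < deriv (deriv δ₀) gstar
      ∧ IsLocalMin δ₀ gstar := by
  set D := (Yhat - Y₀) ⬝ᵥ (Yhat - Y₀)
  have hpσ : 0 < (p : ℝ) * σ2 := mul_pos (by exact_mod_cast hp) hσ2
  have hgstar₁ : 1 + gstar = D / (p * σ2) := by rw [hgstar, add_sub_cancel]
  have hgstar₀ : 1 + gstar ≠ 0 := hgstar₁ ▸ (div_pos hYY hpσ).ne'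
  have hs : (1 + gstar)⁻¹ = p * σ2 / D := by rw [hgstar₁, inv_div]
  have horth : (Y - Yhat) ⬝ᵥ (Yhat - Y₀) = 0 := by
    subst hY₀ hYhat
    exact dotProduct_sub_hatMatrix_mulVec hinv Y β₀
  set F := quadInvOneAdd ((Y - Yhat) ⬝ᵥ (Y - Yhat) + 2 * p * σ2 - n * σ2) D (2 * p * σ2)
  have hδ₀_eq : δ₀ =ᶠ[𝓝 gstar] F := by
    filter_upwards [eventually_one_add_ne_zero hgstar₀] with g hg
    rw [hδ₀]
    exact sure_eq_quadInvOneAdd horth p n σ2 hg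
  have hval : deriv (deriv δ₀) gstar = 2 * (p : ℝ) ^ 4 * σ2 ^ 4 / D ^ 3 := by
    rw [hδ₀_eq.deriv.deriv_eq, (hasDerivAt_deriv_quadInvOneAdd hgstar₀).deriv, hs]
    field_simp
    ring
  refine ⟨hval, hval ▸ by positivity, ?_⟩
  have hmin : IsMinOn F Set.univ gstar :=
    isMinOn_univ_iff.mpr (quadInvOneAdd_le hYY (by rw [hs]; field_simp))
  exact (hmin.isLocalMin univ_mem).congr hδ₀_eq.symm
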